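/- Let $f: \mathcal{A} \to \mathcal{B}$ be a chain functor between differential graded categories that is a homotopy equivalence on each hom-complex (each $f_{X,Y}: \mathcal{A}(X,Y) \to \mathcal{B}(Xf,Yf)$ is a homotopy equivalence of complexes). If objects $Xf$ and $Yf$ are isomorphic in the homotopy category $H^0\mathcal{B}$ via mutually inverse degree-0 cycles $r \in \mathcal{B}(Xf,Yf)^0$, $p \in \mathcal{B}(Yf,Xf)^0$, then $X$ and $Y$ are isomorphic in $H^0\mathcal{A}$ via degree-0 cycles $q \in \mathcal{A}(X,Y)^0$, $t \in \mathcal{A}(Y,X)^0$ with $q f - r$ and $t f - p$ boundaries. -/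

import Mathlib

open CategoryTheory

variable (k : Type u) [CommRing k]

/-- Transport along an equality of degrees in a cochain complex of modules. -/
def xCast (K : CochainComplex (ModuleCat.{u} k) ℤ) {i j : ℤ} (h : i = j) :
    K.X i →ₗ[k] K.X j := by
  subst h; exact LinearMap.id

/-- A (small) differential graded category over `k`: hom-objects are cochain complexes of
`k`-modules, composition is a degreewise bilinear map satisfying associativity, unitality,
and the Leibniz rule with Koszul signs (right-operator conventions of the paper). -/
structure DGCat : Type (u + 1) where
  Obj : Type u
  Hom : Obj → Obj → CochainComplex (ModuleCat.{u} k) ℤ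
  comp : ∀ {X Y Z : Obj} (m n : ℤ),
    (Hom X Y).X m →ₗ[k] (Hom Y Z).X n →ₗ[k] (Hom X Z).X (m + n)
  one : ∀ X : Obj, (Hom X X).X 0
  one_comp : ∀ {X Y : Obj} (n : ℤ) (a : (Hom X Y).X n),
    comp 0 n (one X) a = xCast k (Hom X Y) (zero_add n).symm a
  comp_one : ∀ {X Y : Obj} (n : ℤ) (a : (Hom X Y).X n),
    comp n 0 a (one Y) = xCast k (Hom X Y) (add_zero n).symm a
  d_one : ∀ X : Obj, (Hom X X).d 0 1 (one X) = 0
  comp_assoc : ∀ {W X Y Z : Obj} (m n p : ℤ)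
    (a : (Hom W X).X m) (b : (Hom X Y).X n) (c : (Hom Y Z).X p),
    comp (m + n) p (comp m n a b) c
      = xCast k (Hom W Z) (add_assoc m n p).symm (comp m (n + p) a (comp n p b c))
  leibniz : ∀ {X Y Z : Obj} (m n : ℤ) (a : (Hom X Y).X m) (b : (Hom Y Z).X n),
    (Hom X Z).d (m + n) (m + n + 1) (comp m n a b)
      = xCast k (Hom X Z) (show m + 1 + n = m + n + 1 by omega)
          (comp (m + 1) n ((Hom X Y).d m (m + 1) a) b)
        + (m.negOnePow : ℤ) •
          xCast k (Hom X Z) (show m + (n + 1) = m + n + 1 by omega)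
            (comp m (n + 1) a ((Hom Y Z).d n (n + 1) b))

/-- A DG functor between DG categories. -/
structure DGFunctor (A B : DGCat k) where
  obj : A.Obj → B.Obj
  map : ∀ X Y : A.Obj, A.Hom X Y ⟶ B.Hom (obj X) (obj Y)
  map_one : ∀ X : A.Obj, (map X X).f 0 (A.one X) = B.one (obj X)
  map_comp : ∀ {X Y Z : A.Obj} (m n : ℤ) (a : (A.Hom X Y).X m) (b : (A.Hom Y Z).X n),
    (map X Z).f (m + n) (A.comp m n a b) = B.comp m n ((map X Y).f m a) ((map Y Z).f n b)


lemma xCast_xCast (K : CochainComplex (ModuleCat.{u} k) ℤ) {i j l : ℤ} (h : i = j) (h' : j = l)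
    (x : K.X i) : xCast k K h' (xCast k K h x) = xCast k K (h.trans h') x := by
  subst h; subst h'; rfl
lemma d_cast (K : CochainComplex (ModuleCat.{u} k) ℤ) {i j i' j' : ℤ} (hi : i = i') (hj : j = j')
    (x : K.X i) : K.d i' j' (xCast k K hi x) = xCast k K hj (K.d i j x) := by
  subst hi; subst hj; rfl
lemma d_eq (K : CochainComplex (ModuleCat.{u} k) ℤ) {i j j' : ℤ} (hj : j = j') (x : K.X i) :
    K.d i j' x = xCast k K hj (K.d i j x) := by
  subst hj; rfl
lemma comp_cast_left (Bc : DGCat k) {X Y Z : Bc.Obj} {m m' : ℤ} (hm : m = m') (n : ℤ)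
    (h : m + n = m' + n) (a : (Bc.Hom X Y).X m) (b : (Bc.Hom Y Z).X n) :
    Bc.comp m' n (xCast k (Bc.Hom X Y) hm a) b = xCast k (Bc.Hom X Z) h (Bc.comp m n a b) := by
  subst hm; rfl
lemma comp_cast_right (Bc : DGCat k) {X Y Z : Bc.Obj} (m : ℤ) {n n' : ℤ} (hn : n = n')
    (h : m + n = m + n') (a : (Bc.Hom X Y).X m) (b : (Bc.Hom Y Z).X n) :
    Bc.comp m n' a (xCast k (Bc.Hom Y Z) hn b) = xCast k (Bc.Hom X Z) h (Bc.comp m n a b) := by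
  subst hn; rfl
lemma bdry_left (Bc : DGCat k) {X Y Z : Bc.Obj} (w : (Bc.Hom X Y).X (-1)) (b : (Bc.Hom Y Z).X 0)
    (hb : (Bc.Hom Y Z).d 0 1 b = 0) :
    ∃ v : (Bc.Hom X Z).X (-1), (Bc.Hom X Z).d (-1) 0 v
      = xCast k (Bc.Hom X Z) (zero_add 0) (Bc.comp 0 0 ((Bc.Hom X Y).d (-1) 0 w) b) := by
  refine ⟨xCast k (Bc.Hom X Z) (show (-1 : ℤ) + 0 = -1 by omega) (Bc.comp (-1) 0 w b), ?_⟩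
  have E1 : Bc.comp (-1 + 1) 0 ((Bc.Hom X Y).d (-1) (-1 + 1) w) b
      = xCast k (Bc.Hom X Z) (show (0 : ℤ) + 0 = -1 + 1 + 0 by omega)
          (Bc.comp 0 0 ((Bc.Hom X Y).d (-1) 0 w) b) := by
    rw [d_eq k (Bc.Hom X Y) (show (0 : ℤ) = -1 + 1 by omega) w,
        comp_cast_left k Bc (show (0 : ℤ) = -1 + 1 by omega) 0
          (show (0 : ℤ) + 0 = -1 + 1 + 0 by omega)]
  have E2 : (Bc.Hom Y Z).d 0 (0 + 1) b = 0 := by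
    rw [d_eq k (Bc.Hom Y Z) (show (1 : ℤ) = 0 + 1 by omega) b, hb, map_zero]
  rw [d_cast k (Bc.Hom X Z) (show (-1 : ℤ) + 0 = -1 by omega)
        (show (-1 : ℤ) + 0 + 1 = 0 by omega) (Bc.comp (-1) 0 w b),
      Bc.leibniz (-1) 0 w b, E1, E2, map_zero, map_zero, smul_zero]
  simp only [add_zero]
  rfl
lemma bdry_right (Bc : DGCat k) {X Y Z : Bc.Obj} (a : (Bc.Hom X Y).X 0)
    (ha : (Bc.Hom X Y).d 0 1 a = 0) (w : (Bc.Hom Y Z).X (-1)) :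
    ∃ v : (Bc.Hom X Z).X (-1), (Bc.Hom X Z).d (-1) 0 v
      = xCast k (Bc.Hom X Z) (zero_add 0) (Bc.comp 0 0 a ((Bc.Hom Y Z).d (-1) 0 w)) := by
  refine ⟨xCast k (Bc.Hom X Z) (show (0 : ℤ) + -1 = -1 by omega) (Bc.comp 0 (-1) a w), ?_⟩
  have E1 : Bc.comp 0 (-1 + 1) a ((Bc.Hom Y Z).d (-1) (-1 + 1) w)
      = xCast k (Bc.Hom X Z) (show (0 : ℤ) + 0 = 0 + (-1 + 1) by omega)
          (Bc.comp 0 0 a ((Bc.Hom Y Z).d (-1) 0 w)) := by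
    rw [d_eq k (Bc.Hom Y Z) (show (0 : ℤ) = -1 + 1 by omega) w,
        comp_cast_right k Bc 0 (show (0 : ℤ) = -1 + 1 by omega)
          (show (0 : ℤ) + 0 = 0 + (-1 + 1) by omega)]
  have E2 : (Bc.Hom X Y).d 0 (0 + 1) a = 0 := by
    rw [d_eq k (Bc.Hom X Y) (show (1 : ℤ) = 0 + 1 by omega) a, ha, map_zero]
  rw [d_cast k (Bc.Hom X Z) (show (0 : ℤ) + -1 = -1 by omega)
        (show (0 : ℤ) + -1 + 1 = 0 by omega) (Bc.comp 0 (-1) a w),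
      Bc.leibniz 0 (-1) a w, E1, E2, map_zero, LinearMap.zero_apply, map_zero]
  simp only [zero_add, Int.negOnePow_zero, Units.val_one, one_smul]
  rfl
lemma key_lemma (Bc : DGCat k) {U V : Bc.Obj}
    (a r : (Bc.Hom U V).X 0) (b p : (Bc.Hom V U).X 0)
    (hr : (Bc.Hom U V).d 0 1 r = 0) (hb : (Bc.Hom V U).d 0 1 b = 0)
    (har : ∃ w : (Bc.Hom U V).X (-1), (Bc.Hom U V).d (-1) 0 w = a - r)
    (hbp : ∃ w : (Bc.Hom V U).X (-1), (Bc.Hom V U).d (-1) 0 w = b - p)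
    (hrp : ∃ u : (Bc.Hom U U).X (-1),
      (Bc.Hom U U).d (-1) 0 u
        = xCast k (Bc.Hom U U) (zero_add 0) (Bc.comp 0 0 r p) - Bc.one U) :
    ∃ W : (Bc.Hom U U).X (-1),
      (Bc.Hom U U).d (-1) 0 W
        = xCast k (Bc.Hom U U) (zero_add 0) (Bc.comp 0 0 a b) - Bc.one U := by
  obtain ⟨w1, hw1⟩ := har
  obtain ⟨w2, hw2⟩ := hbp
  obtain ⟨u, hu⟩ := hrp
  obtain ⟨v1, hv1⟩ := bdry_left k Bc w1 b hb
  obtain ⟨v2, hv2⟩ := bdry_right k Bc r hr w2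
  rw [hw1] at hv1
  rw [hw2] at hv2
  have h1 : Bc.comp 0 0 (a - r) b = Bc.comp 0 0 a b - Bc.comp 0 0 r b := by
    rw [map_sub]; rfl
  have h2 : Bc.comp 0 0 r (b - p) = Bc.comp 0 0 r b - Bc.comp 0 0 r p := map_sub _ _ _
  rw [h1, map_sub] at hv1
  rw [h2, map_sub] at hv2
  refine ⟨v1 + v2 + u, ?_⟩
  rw [map_add, map_add, hv1, hv2, hu]
  abel
lemma map_cast {K L : CochainComplex (ModuleCat.{u} k) ℤ} (f : K ⟶ L) {i j : ℤ} (h : i = j)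
    (x : K.X i) : f.f j (xCast k K h x) = xCast k L h (f.f i x) := by
  subst h; rfl
lemma map_d' {K L : CochainComplex (ModuleCat.{u} k) ℤ} (f : K ⟶ L) (i j : ℤ)
    (hij : (ComplexShape.up ℤ).Rel i j) (x : K.X i) :
    L.d i j (f.f i x) = f.f j (K.d i j x) :=
  ConcreteCategory.congr_hom (f.comm' i j hij) x
lemma homotopy_boundary' {K L : CochainComplex (ModuleCat.{u} k) ℤ} {f g : K ⟶ L}
    (H : Homotopy f g) (x : K.X 0) (hx : K.d 0 1 x = 0) :
    ∃ w : L.X (-1), L.d (-1) 0 w = f.f 0 x - g.f 0 x := by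
  refine ⟨H.hom 0 (-1) x, ?_⟩
  have hc := H.comm 0
  rw [dNext_eq H.hom (show (ComplexShape.up ℤ).Rel 0 1 by simp),
      prevD_eq H.hom (show (ComplexShape.up ℤ).Rel (-1) 0 by simp)] at hc
  have h3 : f.f 0 x = H.hom 1 0 (K.d 0 1 x) + L.d (-1) 0 (H.hom 0 (-1) x) + g.f 0 x :=
    ConcreteCategory.congr_hom hc x
  rw [hx, map_zero, zero_add] at h3
  rw [h3]; abel
lemma cycle_pull {K L : CochainComplex (ModuleCat.{u} k) ℤ} (e : HomotopyEquiv K L)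
    (c : K.X 0) (hc : K.d 0 1 c = 0) (W : L.X (-1)) (hW : L.d (-1) 0 W = e.hom.f 0 c) :
    ∃ w : K.X (-1), K.d (-1) 0 w = c := by
  obtain ⟨w3, hw3⟩ := homotopy_boundary' k e.homotopyHomInvId c hc
  refine ⟨e.inv.f (-1) W - w3, ?_⟩
  have hw3' : K.d (-1) 0 w3 = e.inv.f 0 (e.hom.f 0 c) - c := hw3
  rw [map_sub, hw3', map_d' k e.inv (-1) 0 (by simp), hW]
  abel
lemma cycle_comp (Bc : DGCat k) {X Y Z : Bc.Obj} (a : (Bc.Hom X Y).X 0) (b : (Bc.Hom Y Z).X 0)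
    (ha : (Bc.Hom X Y).d 0 1 a = 0) (hb : (Bc.Hom Y Z).d 0 1 b = 0) :
    (Bc.Hom X Z).d 0 1 (xCast k (Bc.Hom X Z) (zero_add 0) (Bc.comp 0 0 a b)) = 0 := by
  have E1 : Bc.comp (0 + 1) 0 ((Bc.Hom X Y).d 0 (0 + 1) a) b = 0 := by
    rw [d_eq k (Bc.Hom X Y) (show (1 : ℤ) = 0 + 1 by omega) a, ha, map_zero, map_zero,
        LinearMap.zero_apply]
  have E2 : Bc.comp 0 (0 + 1) a ((Bc.Hom Y Z).d 0 (0 + 1) b) = 0 := by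
    rw [d_eq k (Bc.Hom Y Z) (show (1 : ℤ) = 0 + 1 by omega) b, hb, map_zero, map_zero]
  rw [d_cast k (Bc.Hom X Z) (zero_add 0) (show (0 : ℤ) + 0 + 1 = 1 by omega) (Bc.comp 0 0 a b),
      Bc.leibniz 0 0 a b, E1, E2]
  simp

/-- Let `F : 𝒜 → ℬ` be a DG functor which is a homotopy equivalence on
each hom-complex.  If `XF` and `YF` are isomorphic in `H⁰ℬ` via mutually inverse
degree-0 cycles `r`, `p`, then `X` and `Y` are isomorphic in `H⁰𝒜` via degree-0
cycles `q`, `t` with `qF - r` and `tF - p` boundaries. -/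
theorem stmt_5 {A B : DGCat k} (F : DGFunctor k A B)
    (hF : ∀ X Y : A.Obj,
      ∃ e : HomotopyEquiv (A.Hom X Y) (B.Hom (F.obj X) (F.obj Y)), e.hom = F.map X Y)
    (X Y : A.Obj)
    (r : (B.Hom (F.obj X) (F.obj Y)).X 0) (p : (B.Hom (F.obj Y) (F.obj X)).X 0)
    (hr : (B.Hom (F.obj X) (F.obj Y)).d 0 1 r = 0)
    (hp : (B.Hom (F.obj Y) (F.obj X)).d 0 1 p = 0)
    (hrp : ∃ u : (B.Hom (F.obj X) (F.obj X)).X (-1),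
      (B.Hom (F.obj X) (F.obj X)).d (-1) 0 u = xCast k (B.Hom (F.obj X) (F.obj X)) (zero_add 0) (B.comp 0 0 r p) - B.one (F.obj X))
    (hpr : ∃ u : (B.Hom (F.obj Y) (F.obj Y)).X (-1),
      (B.Hom (F.obj Y) (F.obj Y)).d (-1) 0 u = xCast k (B.Hom (F.obj Y) (F.obj Y)) (zero_add 0) (B.comp 0 0 p r) - B.one (F.obj Y)) :
    ∃ (q : (A.Hom X Y).X 0) (t : (A.Hom Y X).X 0),
      (A.Hom X Y).d 0 1 q = 0 ∧ (A.Hom Y X).d 0 1 t = 0 ∧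
      (∃ u : (A.Hom X X).X (-1),
        (A.Hom X X).d (-1) 0 u = xCast k (A.Hom X X) (zero_add 0) (A.comp 0 0 q t) - A.one X) ∧
      (∃ u : (A.Hom Y Y).X (-1),
        (A.Hom Y Y).d (-1) 0 u = xCast k (A.Hom Y Y) (zero_add 0) (A.comp 0 0 t q) - A.one Y) ∧
      (∃ w : (B.Hom (F.obj X) (F.obj Y)).X (-1),
        (B.Hom (F.obj X) (F.obj Y)).d (-1) 0 w = (F.map X Y).f 0 q - r) ∧
      (∃ w : (B.Hom (F.obj Y) (F.obj X)).X (-1),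
        (B.Hom (F.obj Y) (F.obj X)).d (-1) 0 w = (F.map Y X).f 0 t - p) := by
  obtain ⟨e1, he1⟩ := hF X Y
  obtain ⟨e2, he2⟩ := hF Y X
  obtain ⟨e3, he3⟩ := hF X X
  obtain ⟨e4, he4⟩ := hF Y Y
  have hq : (A.Hom X Y).d 0 1 (e1.inv.f 0 r) = 0 := by
    rw [map_d' k e1.inv 0 1 (by simp), hr, map_zero]
  have ht : (A.Hom Y X).d 0 1 (e2.inv.f 0 p) = 0 := by
    rw [map_d' k e2.inv 0 1 (by simp), hp, map_zero]
  have hFq : (B.Hom (F.obj X) (F.obj Y)).d 0 1 ((F.map X Y).f 0 (e1.inv.f 0 r)) = 0 := by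
    rw [map_d' k (F.map X Y) 0 1 (by simp), hq, map_zero]
  have hFt : (B.Hom (F.obj Y) (F.obj X)).d 0 1 ((F.map Y X).f 0 (e2.inv.f 0 p)) = 0 := by
    rw [map_d' k (F.map Y X) 0 1 (by simp), ht, map_zero]
  have hFqr : ∃ w : (B.Hom (F.obj X) (F.obj Y)).X (-1),
      (B.Hom (F.obj X) (F.obj Y)).d (-1) 0 w = (F.map X Y).f 0 (e1.inv.f 0 r) - r := by
    obtain ⟨w, hw⟩ := homotopy_boundary' k e1.homotopyInvHomId r hr
    have hw' : (B.Hom (F.obj X) (F.obj Y)).d (-1) 0 w = e1.hom.f 0 (e1.inv.f 0 r) - r := hw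
    rw [he1] at hw'
    exact ⟨w, hw'⟩
  have hFtp : ∃ w : (B.Hom (F.obj Y) (F.obj X)).X (-1),
      (B.Hom (F.obj Y) (F.obj X)).d (-1) 0 w = (F.map Y X).f 0 (e2.inv.f 0 p) - p := by
    obtain ⟨w, hw⟩ := homotopy_boundary' k e2.homotopyInvHomId p hp
    have hw' : (B.Hom (F.obj Y) (F.obj X)).d (-1) 0 w = e2.hom.f 0 (e2.inv.f 0 p) - p := hw
    rw [he2] at hw'
    exact ⟨w, hw'⟩
  -- part 3
  obtain ⟨W, hW⟩ := key_lemma k B ((F.map X Y).f 0 (e1.inv.f 0 r)) r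
    ((F.map Y X).f 0 (e2.inv.f 0 p)) p hr hFt hFqr hFtp hrp
  have hc : (A.Hom X X).d 0 1
      (xCast k (A.Hom X X) (zero_add 0) (A.comp 0 0 (e1.inv.f 0 r) (e2.inv.f 0 p)) - A.one X)
      = 0 := by
    rw [map_sub, cycle_comp k A _ _ hq ht, A.d_one, sub_zero]
  have hFc : (F.map X X).f 0
      (xCast k (A.Hom X X) (zero_add 0) (A.comp 0 0 (e1.inv.f 0 r) (e2.inv.f 0 p)) - A.one X)
      = xCast k (B.Hom (F.obj X) (F.obj X)) (zero_add 0)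
          (B.comp 0 0 ((F.map X Y).f 0 (e1.inv.f 0 r)) ((F.map Y X).f 0 (e2.inv.f 0 p)))
        - B.one (F.obj X) := by
    rw [map_sub, map_cast k (F.map X X) (zero_add 0), F.map_comp 0 0, F.map_one]
  obtain ⟨wX, hwX⟩ := cycle_pull k e3 _ hc W (by rw [he3, hFc]; exact hW)
  -- part 4
  obtain ⟨W', hW'⟩ := key_lemma k B ((F.map Y X).f 0 (e2.inv.f 0 p)) p
    ((F.map X Y).f 0 (e1.inv.f 0 r)) r hp hFq hFtp hFqr hpr
  have hc' : (A.Hom Y Y).d 0 1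
      (xCast k (A.Hom Y Y) (zero_add 0) (A.comp 0 0 (e2.inv.f 0 p) (e1.inv.f 0 r)) - A.one Y)
      = 0 := by
    rw [map_sub, cycle_comp k A _ _ ht hq, A.d_one, sub_zero]
  have hFc' : (F.map Y Y).f 0
      (xCast k (A.Hom Y Y) (zero_add 0) (A.comp 0 0 (e2.inv.f 0 p) (e1.inv.f 0 r)) - A.one Y)
      = xCast k (B.Hom (F.obj Y) (F.obj Y)) (zero_add 0)
          (B.comp 0 0 ((F.map Y X).f 0 (e2.inv.f 0 p)) ((F.map X Y).f 0 (e1.inv.f 0 r)))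
        - B.one (F.obj Y) := by
    rw [map_sub, map_cast k (F.map Y Y) (zero_add 0), F.map_comp 0 0, F.map_one]
  obtain ⟨wY, hwY⟩ := cycle_pull k e4 _ hc' W' (by rw [he4, hFc']; exact hW')
  exact ⟨e1.inv.f 0 r, e2.inv.f 0 p, hq, ht, ⟨wX, hwX⟩, ⟨wY, hwY⟩, hFqr, hFtp⟩
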